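/- (Discrete trace theorem for C_k □ P_ℓ.) Assume ℓ ≥ 2. For every φ : ℤ/kℤ → ℝ: (i) every u : (ℤ/kℤ) × {1,…,ℓ} → ℝ with u(i,1) = φ(i) for all i satisfies |φ|_Γ² ≤ max{3c, 4π²} · |u|_G²; and (ii) there exists u : (ℤ/kℤ) × {1,…,ℓ} → ℝ with u(i,1) = φ(i) for all i and |u|_G² ≤ (2c + 233/9) · |φ|_Γ². -/

import Mathlib

open Real Finset

noncomputable section

/-- The cycle distance on `ℤ/kℤ`. -/
def cycDist (k : ℕ) (p q : ZMod k) : ℕ := min (p - q).val (q - p).val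

/-- The boundary seminorm squared, summed over unordered pairs of distinct elements. -/
def bSemiSq (k : ℕ) [NeZero k] (φ : ZMod k → ℝ) : ℝ :=
  (1 / 2) * ∑ p : ZMod k, ∑ q : ZMod k,
    if p ≠ q then (φ p - φ q) ^ 2 / (cycDist k p q : ℝ) ^ 2 else 0

/-- The energy seminorm squared on `G_{k,ℓ} = C_k □ P_ℓ`. -/
def energySq (k ℓ : ℕ) [NeZero k] (u : ZMod k → ℕ → ℝ) : ℝ :=
  (∑ i : ZMod k, ∑ j ∈ Finset.Icc 1 ℓ, (u (i + 1) j - u i j) ^ 2)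
  + ∑ i : ZMod k, ∑ j ∈ Finset.Icc 1 (ℓ - 1), (u i (j + 1) - u i j) ^ 2

/-!
Write `E(d) = ∑ᵢ (φ(i + d) - φ(i))²`. Grouping the pairs in `|φ|_Γ²` by their difference gives
`∑_{d ≤ M} E(d)/d² ≤ |φ|_Γ² ≤ ∑_{d ≤ k/2} E(d)/d²` whenever `2M < k`.

Trace inequality: for a level `m ≤ min(d + 1, ℓ)`, route `φ(i + d) - φ(i)` through level `m`. The
horizontal part costs `d²` times the horizontal energy of level `m`; the two vertical parts are
bounded by partial sums of vertical increments, which Hardy's inequality controls once divided by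
`d`. Distances `d ≤ ℓ` use level `d` and longer ones the average over all `ℓ` levels; as
`k/2 < cℓ`, this gives `|φ|_Γ² ≤ 32 · (vertical energy) + 2c · (horizontal energy)`.

Extension: let `u(i, j)` be the mean of `φ` over `i, …, i + j - 1`. Its horizontal energy at level
`j` is `E(j)/j²`, and by Jensen its vertical energy between levels `j` and `j + 1` is at most
`(j (j + 1)²)⁻¹ ∑_{s ≤ j} E(s)`, so `|u|_G² ≤ 2 |φ|_Γ²`.
-/

section ShiftEnergy

variable {G : Type*} [AddCommGroup G] [Fintype G]

def shiftEnergy (φ : G → ℝ) (g : G) : ℝ := ∑ i, (φ (i + g) - φ i) ^ 2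

lemma shiftEnergy_nonneg (φ : G → ℝ) (g : G) : 0 ≤ shiftEnergy φ g :=
  sum_nonneg fun _ _ => sq_nonneg _

lemma shiftEnergy_zero (φ : G → ℝ) : shiftEnergy φ 0 = 0 := by
  simp [shiftEnergy]

lemma shiftEnergy_sub (φ : G → ℝ) (a b : G) :
    shiftEnergy φ (a - b) = ∑ i, (φ (i + a) - φ (i + b)) ^ 2 :=
  (Fintype.sum_equiv (Equiv.addRight b) _ _ fun i => by simp [add_assoc]).symm

lemma shiftEnergy_neg (φ : G → ℝ) (g : G) : shiftEnergy φ (-g) = shiftEnergy φ g := by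
  rw [← zero_sub, shiftEnergy_sub, shiftEnergy]
  simp [sub_sq_comm]

lemma shiftEnergy_nsmul_le (φ : G → ℝ) (g : G) (n : ℕ) :
    shiftEnergy φ (n • g) ≤ n ^ 2 * shiftEnergy φ g := by
  have telescope : ∀ i, φ (i + n • g) - φ i
      = ∑ t ∈ range n, (φ (i + (t + 1) • g) - φ (i + t • g)) := fun i => by
    rw [sum_range_sub (fun t => φ (i + t • g))]; simp
  calc shiftEnergy φ (n • g)
      ≤ ∑ i, n * ∑ t ∈ range n, (φ (i + (t + 1) • g) - φ (i + t • g)) ^ 2 := by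
        refine sum_le_sum fun i _ => ?_
        rw [telescope]
        simpa using sq_sum_le_card_mul_sum_sq (s := range n)
          (f := fun t => φ (i + (t + 1) • g) - φ (i + t • g))
    _ = n ^ 2 * shiftEnergy φ g := by
        simp_rw [← mul_sum, sum_comm (s := univ), ← shiftEnergy_sub, add_smul, one_smul,
          add_sub_cancel_left, sum_const, card_range, nsmul_eq_mul]
        ring

lemma shiftEnergy_le_of_sum_sq_sub (φ ψ : G → ℝ) (g : G) :
    shiftEnergy φ g ≤ 2 * shiftEnergy ψ g + 8 * ∑ i, (ψ i - φ i) ^ 2 := by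
  have shift : ∑ i, (ψ (i + g) - φ (i + g)) ^ 2 = ∑ i, (ψ i - φ i) ^ 2 :=
    Fintype.sum_equiv (Equiv.addRight g) _ _ fun _ => rfl
  calc shiftEnergy φ g
      ≤ ∑ i, (2 * (ψ (i + g) - ψ i) ^ 2 + 4 * (ψ (i + g) - φ (i + g)) ^ 2
          + 4 * (ψ i - φ i) ^ 2) := by
        refine sum_le_sum fun i _ => ?_
        have decompose : φ (i + g) - φ i
            = (ψ (i + g) - ψ i) - (ψ (i + g) - φ (i + g)) + (ψ i - φ i) := by ring
        rw [decompose]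
        nlinarith [sq_nonneg ((ψ (i + g) - ψ i) + (ψ (i + g) - φ (i + g)) - (ψ i - φ i)),
          sq_nonneg ((ψ (i + g) - φ (i + g)) + (ψ i - φ i))]
    _ = 2 * shiftEnergy ψ g + 8 * ∑ i, (ψ i - φ i) ^ 2 := by
        simp only [sum_add_distrib, ← mul_sum, shift, shiftEnergy]
        ring

lemma sum_sq_sub_average_le {ι : Type*} (φ : G → ℝ) {s : Finset ι} (hs : s.Nonempty)
    (a : G) (b : ι → G) :
    ∑ i, (φ (i + a) - (#s : ℝ)⁻¹ * ∑ t ∈ s, φ (i + b t)) ^ 2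
      ≤ (#s : ℝ)⁻¹ * ∑ t ∈ s, shiftEnergy φ (a - b t) := by
  have hs : (0 : ℝ) < #s := by exact_mod_cast hs.card_pos
  calc ∑ i, (φ (i + a) - (#s : ℝ)⁻¹ * ∑ t ∈ s, φ (i + b t)) ^ 2
      = ∑ i, ((#s : ℝ)⁻¹ * ∑ t ∈ s, (φ (i + a) - φ (i + b t))) ^ 2 := by
        simp only [sum_sub_distrib, sum_const, nsmul_eq_mul, mul_sub, inv_mul_cancel_left₀ hs.ne']
    _ ≤ ∑ i, (#s : ℝ)⁻¹ * ∑ t ∈ s, (φ (i + a) - φ (i + b t)) ^ 2 := by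
        refine sum_le_sum fun i _ => ?_
        rw [mul_pow, sq, mul_assoc]
        gcongr
        rw [inv_mul_le_iff₀ hs]
        exact sq_sum_le_card_mul_sum_sq
    _ = (#s : ℝ)⁻¹ * ∑ t ∈ s, shiftEnergy φ (a - b t) := by
        simp_rw [← mul_sum, sum_comm (s := univ), shiftEnergy_sub]

end ShiftEnergy

section Boundary

variable {k : ℕ}

lemma cycDist_add_right (p e : ZMod k) : cycDist k p (p + e) = cycDist k 0 e := by
  simp [cycDist]

lemma cycDist_zero_neg (e : ZMod k) : cycDist k 0 (-e) = cycDist k 0 e := by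
  simp [cycDist, min_comm]

lemma natCast_injOn_Icc {M : ℕ} (hM : M < k) : Set.InjOn (Nat.cast : ℕ → ZMod k) (Icc 1 M) :=
  fun a ha b hb hab => by
    simp only [coe_Icc, Set.mem_Icc] at ha hb
    rwa [ZMod.natCast_eq_natCast_iff', Nat.mod_eq_of_lt (by omega),
      Nat.mod_eq_of_lt (by omega)] at hab

lemma neg_natCast_injOn_Icc {M : ℕ} (hM : M < k) :
    Set.InjOn (fun d : ℕ => -(d : ZMod k)) (Icc 1 M) :=
  fun _ ha _ hb hab => natCast_injOn_Icc hM ha hb (neg_inj.mp hab)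

variable [NeZero k]

lemma cycDist_zero_natCast {d : ℕ} (hd : 2 * d ≤ k) : cycDist k 0 d = d := by
  have hdk : d < k := by have := NeZero.pos k; omega
  simp only [cycDist, zero_sub, sub_zero, ZMod.neg_val, ZMod.val_natCast_of_lt hdk,
    ZMod.natCast_eq_zero_iff]
  split_ifs with h
  · simp [Nat.eq_zero_of_dvd_of_lt h hdk]
  · omega

-- The term `e = 0` is `0 / 0 = 0`, matching the excluded diagonal `p = q`.
lemma bSemiSq_eq (φ : ZMod k → ℝ) :
    bSemiSq k φ = 1 / 2 * ∑ e, shiftEnergy φ e / (cycDist k 0 e : ℝ) ^ 2 := by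
  rw [bSemiSq]
  congr 1
  calc ∑ p, ∑ q, (if p ≠ q then (φ p - φ q) ^ 2 / (cycDist k p q : ℝ) ^ 2 else 0)
      = ∑ p, ∑ e, (φ (p + e) - φ p) ^ 2 / (cycDist k 0 e : ℝ) ^ 2 := by
        refine sum_congr rfl fun p _ => ?_
        refine Fintype.sum_equiv (Equiv.addLeft p).symm _ _ fun q => ?_
        obtain ⟨e, rfl⟩ : ∃ e, q = p + e := ⟨q - p, by abel⟩
        split_ifs with h
        · simp [cycDist_add_right, sub_sq_comm]
        · simp_all
    _ = ∑ e, shiftEnergy φ e / (cycDist k 0 e : ℝ) ^ 2 := by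
        rw [sum_comm]
        simp_rw [shiftEnergy, sum_div]

lemma bSemiSq_nonneg (φ : ZMod k → ℝ) : 0 ≤ bSemiSq k φ := by
  rw [bSemiSq_eq]
  exact mul_nonneg (by norm_num) (sum_nonneg fun e _ => by
    have := shiftEnergy_nonneg φ e; positivity)

variable {f : ZMod k → ℝ}

lemma two_mul_sum_Icc_le_sum (hf : ∀ e, f (-e) = f e) (hf0 : ∀ e, 0 ≤ f e) {M : ℕ}
    (hM : 2 * M < k) : 2 * ∑ d ∈ Icc 1 M, f d ≤ ∑ e, f e := by
  have disjoint : Disjoint ((Icc 1 M).image (Nat.cast : ℕ → ZMod k))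
      ((Icc 1 M).image fun d : ℕ => -(d : ZMod k)) := by
    simp only [disjoint_left, mem_image, mem_Icc, not_exists, not_and]
    rintro _ ⟨a, ha, rfl⟩ b hb hab
    have : ((a + b : ℕ) : ZMod k) = 0 := by push_cast; rw [← hab]; ring
    rw [ZMod.natCast_eq_zero_iff] at this
    exact absurd (Nat.le_of_dvd (by omega) this) (by omega)
  calc 2 * ∑ d ∈ Icc 1 M, f d = ∑ d ∈ Icc 1 M, f d + ∑ d ∈ Icc 1 M, f (-(d : ZMod k)) := by
        simp [hf, two_mul]
    _ = ∑ e ∈ (Icc 1 M).image (Nat.cast : ℕ → ZMod k)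
          ∪ (Icc 1 M).image (fun d : ℕ => -(d : ZMod k)), f e := by
        rw [sum_union disjoint, sum_image (natCast_injOn_Icc (by omega)),
          sum_image (neg_natCast_injOn_Icc (by omega))]
    _ ≤ ∑ e, f e := sum_le_univ_sum_of_nonneg hf0

lemma sum_le_two_mul_sum_Icc (hf : ∀ e, f (-e) = f e) (hf0 : ∀ e, 0 ≤ f e) (h0 : f 0 = 0) :
    ∑ e, f e ≤ 2 * ∑ d ∈ Icc 1 (k / 2), f d := by
  set A := (Icc 1 (k / 2)).image (Nat.cast : ℕ → ZMod k)
  set B := (Icc 1 (k / 2)).image fun d : ℕ => -(d : ZMod k)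
  have hk : k / 2 < k := Nat.div_lt_self (NeZero.pos k) one_lt_two
  have cover : ∀ e ∉ A ∪ B, e = 0 := by
    intro e he
    by_contra h
    have hval := ZMod.val_lt e
    have hpos : e.val ≠ 0 := (ZMod.val_eq_zero e).not.mpr h
    simp only [A, B, mem_union, mem_image, mem_Icc, not_or, not_exists, not_and] at he
    by_cases hle : e.val ≤ k / 2
    · exact he.1 e.val ⟨by omega, hle⟩ (ZMod.natCast_zmod_val e)
    · refine he.2 (-e).val ⟨?_, ?_⟩ (by rw [ZMod.natCast_zmod_val, neg_neg]) <;>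
        rw [ZMod.neg_val, if_neg h] <;> omega
  calc ∑ e, f e = ∑ e ∈ A ∪ B, f e :=
        (sum_subset (subset_univ _) fun e _ he => by rw [cover e he, h0]).symm
    _ ≤ ∑ e ∈ A, f e + ∑ e ∈ B, f e := by
        rw [← sum_union_inter]
        exact le_add_of_nonneg_right (sum_nonneg fun e _ => hf0 e)
    _ = 2 * ∑ d ∈ Icc 1 (k / 2), f d := by
        rw [sum_image (natCast_injOn_Icc hk), sum_image (neg_natCast_injOn_Icc hk)]
        simp [hf, two_mul]

variable (φ : ZMod k → ℝ)

lemma sum_Icc_shiftEnergy_div_cycDist_sq {M : ℕ} (hM : 2 * M ≤ k) :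
    ∑ d ∈ Icc 1 M, shiftEnergy φ d / (cycDist k 0 d : ℝ) ^ 2
      = ∑ d ∈ Icc 1 M, shiftEnergy φ d / (d : ℝ) ^ 2 :=
  sum_congr rfl fun d hd => by
    rw [cycDist_zero_natCast (by simp only [mem_Icc] at hd; omega)]

lemma sum_Icc_shiftEnergy_div_le_bSemiSq {M : ℕ} (hM : 2 * M < k) :
    ∑ d ∈ Icc 1 M, shiftEnergy φ d / (d : ℝ) ^ 2 ≤ bSemiSq k φ := by
  rw [bSemiSq_eq, ← sum_Icc_shiftEnergy_div_cycDist_sq φ hM.le]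
  linarith [two_mul_sum_Icc_le_sum (f := fun e => shiftEnergy φ e / (cycDist k 0 e : ℝ) ^ 2)
    (fun e => by simp [shiftEnergy_neg, cycDist_zero_neg])
    (fun e => div_nonneg (shiftEnergy_nonneg φ e) (sq_nonneg _)) hM]

lemma bSemiSq_le_sum_Icc_shiftEnergy_div :
    bSemiSq k φ ≤ ∑ d ∈ Icc 1 (k / 2), shiftEnergy φ d / (d : ℝ) ^ 2 := by
  rw [bSemiSq_eq, ← sum_Icc_shiftEnergy_div_cycDist_sq φ (Nat.mul_div_le k 2)]
  linarith [sum_le_two_mul_sum_Icc (f := fun e => shiftEnergy φ e / (cycDist k 0 e : ℝ) ^ 2)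
    (fun e => by simp [shiftEnergy_neg, cycDist_zero_neg])
    (fun e => div_nonneg (shiftEnergy_nonneg φ e) (sq_nonneg _)) (by simp [shiftEnergy_zero])]

end Boundary

section Extension

variable {G : Type*} [AddCommGroup G] (φ : G → ℝ) (g : G)

def shiftAverage (i : G) (j : ℕ) : ℝ := (j : ℝ)⁻¹ * ∑ t ∈ range j, φ (i + t • g)

lemma shiftAverage_one (i : G) : shiftAverage φ g i 1 = φ i := by
  simp [shiftAverage]

lemma shiftAverage_succ_sub (i : G) (j : ℕ) :
    shiftAverage φ g i (j + 1) - shiftAverage φ g i j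
      = ((j : ℝ) + 1)⁻¹ * (φ (i + j • g) - shiftAverage φ g i j) := by
  simp only [shiftAverage, sum_range_succ]
  rcases j.eq_zero_or_pos with rfl | hj
  · simp
  · field_simp
    push_cast
    ring

variable [Fintype G]

lemma sum_sq_shiftAverage_add_sub (j : ℕ) :
    ∑ i, (shiftAverage φ g (i + g) j - shiftAverage φ g i j) ^ 2
      = shiftEnergy φ (j • g) / (j : ℝ) ^ 2 := by
  have telescope : ∀ i, shiftAverage φ g (i + g) j - shiftAverage φ g i j
      = (j : ℝ)⁻¹ * (φ (i + j • g) - φ i) := fun i => by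
    have := sum_range_sub (fun t => φ (i + t • g)) j
    simp only [succ_nsmul', ← add_assoc, zero_smul, add_zero] at this
    rw [shiftAverage, shiftAverage, ← mul_sub, ← sum_sub_distrib, this]
  simp_rw [telescope, mul_pow, ← mul_sum, inv_pow, shiftEnergy, inv_mul_eq_div]

lemma sum_sq_shiftAverage_succ_sub_le {j : ℕ} (hj : 1 ≤ j) :
    ∑ i, (shiftAverage φ g i (j + 1) - shiftAverage φ g i j) ^ 2
      ≤ ((j : ℝ) * (j + 1) ^ 2)⁻¹ * ∑ s ∈ Icc 1 j, shiftEnergy φ (s • g) := by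
  have reflect : ∑ t ∈ range j, shiftEnergy φ (j • g - t • g)
      = ∑ s ∈ Icc 1 j, shiftEnergy φ (s • g) := by
    refine sum_nbij' (fun t => j - t) (fun s => j - s) ?_ ?_ ?_ ?_ fun t ht => ?_
    iterate 4 (intro t ht; simp only [mem_range, mem_Icc] at ht ⊢; omega)
    rw [sub_nsmul g (mem_range.mp ht).le, sub_eq_add_neg]
  have jensen := sum_sq_sub_average_le φ (s := range j) (nonempty_range_iff.mpr (by omega))
    (j • g) (fun t => t • g)
  simp only [card_range, reflect] at jensen
  simp_rw [shiftAverage_succ_sub, mul_pow, ← mul_sum]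
  calc ((j : ℝ) + 1)⁻¹ ^ 2 * ∑ i, (φ (i + j • g) - shiftAverage φ g i j) ^ 2
      ≤ ((j : ℝ) + 1)⁻¹ ^ 2 * ((j : ℝ)⁻¹ * ∑ s ∈ Icc 1 j, shiftEnergy φ (s • g)) := by
        gcongr
        exact jensen
    _ = _ := by rw [mul_inv, inv_pow]; ring

end Extension

lemma sum_Icc_inv_mul_succ_sq_le {s : ℕ} (hs : 1 ≤ s) (N : ℕ) :
    ∑ j ∈ Icc s N, ((j : ℝ) * (j + 1) ^ 2)⁻¹ ≤ ((s : ℝ) ^ 2)⁻¹ := by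
  have hs' : (1 : ℝ) ≤ s := by exact_mod_cast hs
  have telescope : ∑ j ∈ Ico s (N + 1), ((j : ℝ)⁻¹ - ((j + 1 : ℕ) : ℝ)⁻¹) ≤ (s : ℝ)⁻¹ := by
    rcases le_or_gt s (N + 1) with h | h
    · have := sum_Ico_sub (fun j : ℕ => -(j : ℝ)⁻¹) h
      simp only [neg_sub_neg] at this
      rw [this]
      linarith [inv_nonneg.mpr (Nat.cast_nonneg (α := ℝ) (N + 1))]
    · rw [Ico_eq_empty (by omega), sum_empty]
      positivity
  calc ∑ j ∈ Icc s N, ((j : ℝ) * (j + 1) ^ 2)⁻¹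
      ≤ ∑ j ∈ Ico s (N + 1), ((s : ℝ) + 1)⁻¹ * ((j : ℝ)⁻¹ - ((j + 1 : ℕ) : ℝ)⁻¹) := by
        rw [← Ico_add_one_right_eq_Icc]
        refine sum_le_sum fun j hj => ?_
        have hj : (s : ℝ) ≤ j := by exact_mod_cast (mem_Ico.mp hj).1
        have hj0 : (0 : ℝ) < j := by linarith
        have : (j : ℝ)⁻¹ - ((j + 1 : ℕ) : ℝ)⁻¹ = ((j : ℝ) * (j + 1))⁻¹ := by
          push_cast
          field_simp
          ring
        rw [this, ← mul_inv]
        refine inv_anti₀ (by positivity) ?_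
        have := mul_nonneg (mul_nonneg hj0.le (by positivity : (0 : ℝ) ≤ j + 1)) (sub_nonneg.mpr hj)
        nlinarith
    _ ≤ ((s : ℝ) + 1)⁻¹ * (s : ℝ)⁻¹ := by
        rw [← mul_sum]
        gcongr
    _ ≤ ((s : ℝ) ^ 2)⁻¹ := by
        rw [← mul_inv, sq]
        gcongr
        linarith

lemma energySq_shiftAverage_le {k ℓ : ℕ} [NeZero k] (φ : ZMod k → ℝ) (h : 2 * ℓ < k) :
    energySq k ℓ (shiftAverage φ 1) ≤ 2 * bSemiSq k φ := by
  have horizontal : ∑ i, ∑ j ∈ Icc 1 ℓ, (shiftAverage φ 1 (i + 1) j - shiftAverage φ 1 i j) ^ 2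
      ≤ bSemiSq k φ := by
    rw [sum_comm]
    simp_rw [sum_sq_shiftAverage_add_sub, nsmul_one]
    exact sum_Icc_shiftEnergy_div_le_bSemiSq φ h
  have vertical : ∑ i, ∑ j ∈ Icc 1 (ℓ - 1), (shiftAverage φ 1 i (j + 1) - shiftAverage φ 1 i j) ^ 2
      ≤ bSemiSq k φ := calc
    _ = ∑ j ∈ Icc 1 (ℓ - 1), ∑ i, (shiftAverage φ 1 i (j + 1) - shiftAverage φ 1 i j) ^ 2 := by
        rw [sum_comm]
    _ ≤ ∑ j ∈ Icc 1 (ℓ - 1), ((j : ℝ) * (j + 1) ^ 2)⁻¹ * ∑ s ∈ Icc 1 j, shiftEnergy φ s :=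
        sum_le_sum fun j hj => by
          simpa using sum_sq_shiftAverage_succ_sub_le φ 1 (mem_Icc.mp hj).1
    _ = ∑ s ∈ Icc 1 (ℓ - 1), shiftEnergy φ s * ∑ j ∈ Icc s (ℓ - 1), ((j : ℝ) * (j + 1) ^ 2)⁻¹ := by
        simp_rw [mul_sum]
        exact (sum_comm' fun j s => by simp only [mem_Icc]; omega).trans
          (sum_congr rfl fun _ _ => sum_congr rfl fun _ _ => mul_comm _ _)
    _ ≤ ∑ s ∈ Icc 1 (ℓ - 1), shiftEnergy φ s / (s : ℝ) ^ 2 :=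
        sum_le_sum fun s hs => by
          rw [div_eq_mul_inv]
          exact mul_le_mul_of_nonneg_left (sum_Icc_inv_mul_succ_sq_le (mem_Icc.mp hs).1 _)
            (shiftEnergy_nonneg φ s)
    _ ≤ bSemiSq k φ := sum_Icc_shiftEnergy_div_le_bSemiSq φ (by omega)
  rw [energySq]
  linarith

lemma hardy_sum_sq_le (b : ℕ → ℝ) (N : ℕ) :
    ∑ n ∈ Icc 1 N, ((∑ j ∈ Icc 1 n, b j) / n) ^ 2 ≤ 4 * ∑ n ∈ Icc 1 N, b n ^ 2 := by
  set t : ℕ → ℝ := fun n => (∑ j ∈ Icc 1 n, b j) / n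
  have step : ∀ n : ℕ, b (n + 1) = (n + 1) * t (n + 1) - n * t n := fun n => by
    rcases n.eq_zero_or_pos with rfl | hn
    · simp [t]
    · simp only [t, sum_Icc_succ_top (Nat.le_add_left 1 n)]
      field_simp
      push_cast
      ring
  -- Telescoping: `t m ^ 2 - 2 t m b m ≤ (m - 1) t (m - 1) ^ 2 - m t m ^ 2`.
  have telescope : ∀ n, ∑ m ∈ Icc 1 n, (t m ^ 2 - 2 * t m * b m) ≤ -(n * t n ^ 2) := by
    intro n
    induction n with
    | zero => simp
    | succ n ih =>
      rw [sum_Icc_succ_top (Nat.le_add_left 1 n), step]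
      push_cast
      nlinarith [mul_nonneg (Nat.cast_nonneg n : (0 : ℝ) ≤ n) (sq_nonneg (t (n + 1) - t n))]
  set X := ∑ m ∈ Icc 1 N, t m ^ 2
  set Z := ∑ m ∈ Icc 1 N, b m ^ 2
  have hX : X ≤ 2 * ∑ m ∈ Icc 1 N, t m * b m := by
    have := telescope N
    simp only [sum_sub_distrib, mul_assoc, ← mul_sum] at this
    nlinarith [mul_nonneg (Nat.cast_nonneg N : (0 : ℝ) ≤ N) (sq_nonneg (t N))]
  have cauchy_schwarz := sum_mul_sq_le_sq_mul_sq (Icc 1 N) t b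
  have hZ : 0 ≤ Z := sum_nonneg fun _ _ => sq_nonneg _
  nlinarith [sum_nonneg fun m (_ : m ∈ Icc 1 N) => sq_nonneg (t m)]

def pathIncrement (v : ℕ → ℝ) (ℓ j : ℕ) : ℝ := if j < ℓ then |v (j + 1) - v j| else 0

lemma pathIncrement_nonneg (v : ℕ → ℝ) (ℓ j : ℕ) : 0 ≤ pathIncrement v ℓ j := by
  unfold pathIncrement
  split_ifs <;> positivity

lemma abs_sub_le_sum_pathIncrement (v : ℕ → ℝ) {ℓ m d : ℕ} (hm : 1 ≤ m) (hmℓ : m ≤ ℓ)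
    (hmd : m ≤ d + 1) : |v m - v 1| ≤ ∑ j ∈ Icc 1 d, pathIncrement v ℓ j := calc
  |v m - v 1| = |∑ j ∈ Ico 1 m, (v (j + 1) - v j)| := by rw [sum_Ico_sub v hm]
  _ ≤ ∑ j ∈ Ico 1 m, pathIncrement v ℓ j := by
      refine (abs_sum_le_sum_abs _ _).trans_eq (sum_congr rfl fun j hj => ?_)
      rw [pathIncrement, if_pos (by simp only [mem_Ico] at hj; omega)]
  _ ≤ ∑ j ∈ Icc 1 d, pathIncrement v ℓ j :=
      sum_le_sum_of_subset_of_nonneg (fun j hj => by simp only [mem_Ico, mem_Icc] at hj ⊢; omega)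
        fun j _ _ => pathIncrement_nonneg v ℓ j

lemma sum_sq_pathIncrement (v : ℕ → ℝ) {ℓ N : ℕ} (h : ℓ ≤ N + 1) :
    ∑ j ∈ Icc 1 N, pathIncrement v ℓ j ^ 2 = ∑ j ∈ Icc 1 (ℓ - 1), (v (j + 1) - v j) ^ 2 := by
  simp only [pathIncrement, ite_pow, sq_abs, ne_eq, OfNat.ofNat_ne_zero, not_false_eq_true,
    zero_pow, ← sum_filter]
  congr 1
  ext j
  simp only [mem_filter, mem_Icc]
  omega

section Trace

variable {G : Type*} [AddCommGroup G] [Fintype G]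

lemma shiftEnergy_nsmul_div_sq_le {φ : G → ℝ} {u : G → ℕ → ℝ} (hu : ∀ i, u i 1 = φ i) (g : G)
    {ℓ d m : ℕ} (hd : 1 ≤ d) (hm : 1 ≤ m) (hmℓ : m ≤ ℓ) (hmd : m ≤ d + 1) :
    shiftEnergy φ (d • g) / (d : ℝ) ^ 2
      ≤ 8 * ∑ i, ((∑ j ∈ Icc 1 d, pathIncrement (u i) ℓ j) / d) ^ 2
        + 2 * shiftEnergy (fun i => u i m) g := by
  have hd : (0 : ℝ) < (d : ℝ) ^ 2 := by positivity
  have column : ∀ i, (u i m - φ i) ^ 2 ≤ (∑ j ∈ Icc 1 d, pathIncrement (u i) ℓ j) ^ 2 := fun i => by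
    rw [← hu i, ← sq_abs]
    exact pow_le_pow_left₀ (abs_nonneg _) (abs_sub_le_sum_pathIncrement (u i) hm hmℓ hmd) 2
  rw [div_le_iff₀ hd]
  calc shiftEnergy φ (d • g)
      ≤ 2 * shiftEnergy (fun i => u i m) (d • g) + 8 * ∑ i, (u i m - φ i) ^ 2 :=
        shiftEnergy_le_of_sum_sq_sub φ _ _
    _ ≤ 2 * ((d : ℝ) ^ 2 * shiftEnergy (fun i => u i m) g)
          + 8 * ∑ i, (∑ j ∈ Icc 1 d, pathIncrement (u i) ℓ j) ^ 2 := by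
        gcongr 2 * ?_ + 8 * ?_
        · exact shiftEnergy_nsmul_le _ g d
        · exact sum_le_sum fun i _ => column i
    _ = _ := by
        simp_rw [div_pow, ← sum_div]
        field_simp
        ring

lemma sum_Icc_shiftEnergy_nsmul_div_sq_le {φ : G → ℝ} {u : G → ℕ → ℝ} (hu : ∀ i, u i 1 = φ i)
    (g : G) {ℓ D : ℕ} (hℓ : 0 < ℓ) (hℓD : ℓ ≤ D) :
    ∑ d ∈ Icc 1 D, shiftEnergy φ (d • g) / (d : ℝ) ^ 2
      ≤ 8 * ∑ d ∈ Icc 1 D, ∑ i, ((∑ j ∈ Icc 1 d, pathIncrement (u i) ℓ j) / d) ^ 2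
        + 2 * D / ℓ * ∑ m ∈ Icc 1 ℓ, shiftEnergy (fun i => u i m) g := by
  set A : ℕ → ℝ := fun d => ∑ i, ((∑ j ∈ Icc 1 d, pathIncrement (u i) ℓ j) / d) ^ 2
  set H : ℕ → ℝ := fun m => shiftEnergy (fun i => u i m) g
  have hℓ' : (0 : ℝ) < ℓ := by exact_mod_cast hℓ
  have near : ∀ d ∈ Icc 1 ℓ, shiftEnergy φ (d • g) / (d : ℝ) ^ 2 ≤ 8 * A d + 2 * H d :=
    fun d hd => by
      simp only [mem_Icc] at hd
      exact shiftEnergy_nsmul_div_sq_le hu g hd.1 hd.1 hd.2 (by omega)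
  have far : ∀ d ∈ Ioc ℓ D, shiftEnergy φ (d • g) / (d : ℝ) ^ 2
      ≤ 8 * A d + 2 / ℓ * ∑ m ∈ Icc 1 ℓ, H m := fun d hd => by
    simp only [mem_Ioc] at hd
    have := card_nsmul_le_sum (Icc 1 ℓ) (fun m => 8 * A d + 2 * H m) _ fun m hm => by
      simp only [mem_Icc] at hm
      exact shiftEnergy_nsmul_div_sq_le hu g (by omega) hm.1 hm.2 (by omega)
    simp only [Nat.card_Icc, add_tsub_cancel_right, nsmul_eq_mul, sum_add_distrib, sum_const,
      ← mul_sum] at this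
    rw [div_mul_eq_mul_div, ← sub_le_iff_le_add', le_div_iff₀ hℓ']
    linarith
  have split : ∀ f : ℕ → ℝ, ∑ d ∈ Icc 1 D, f d = ∑ d ∈ Icc 1 ℓ, f d + ∑ d ∈ Ioc ℓ D, f d := by
    intro f
    have hI : ∀ n, Icc 1 n = Ioc 0 n := fun n => by ext; simp only [mem_Icc, mem_Ioc]; omega
    rw [hI, hI, sum_Ioc_consecutive f (Nat.zero_le ℓ) hℓD]
  calc ∑ d ∈ Icc 1 D, shiftEnergy φ (d • g) / (d : ℝ) ^ 2
      ≤ ∑ d ∈ Icc 1 ℓ, (8 * A d + 2 * H d)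
          + ∑ d ∈ Ioc ℓ D, (8 * A d + 2 / ℓ * ∑ m ∈ Icc 1 ℓ, H m) := by
        rw [split]
        exact add_le_add (sum_le_sum near) (sum_le_sum far)
    _ = 8 * ∑ d ∈ Icc 1 D, A d + 2 * D / ℓ * ∑ m ∈ Icc 1 ℓ, H m := by
        simp only [sum_add_distrib, ← mul_sum, split A, sum_const, Nat.card_Ioc, nsmul_eq_mul,
          Nat.cast_sub hℓD]
        field_simp
        ring

end Trace

lemma sum_Icc_sum_sq_pathIncrement_div_le {ι : Type*} [Fintype ι] (u : ι → ℕ → ℝ) {ℓ D : ℕ}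
    (h : ℓ ≤ D + 1) :
    ∑ d ∈ Icc 1 D, ∑ i, ((∑ j ∈ Icc 1 d, pathIncrement (u i) ℓ j) / d) ^ 2
      ≤ 4 * ∑ i, ∑ j ∈ Icc 1 (ℓ - 1), (u i (j + 1) - u i j) ^ 2 := by
  rw [sum_comm, mul_sum]
  exact sum_le_sum fun i _ => (hardy_sum_sq_le _ D).trans_eq (by rw [sum_sq_pathIncrement _ h])

lemma bSemiSq_le_of_extension {k ℓ c : ℕ} [NeZero k] {φ : ZMod k → ℝ} {u : ZMod k → ℕ → ℝ}
    (hu : ∀ i, u i 1 = φ i) (hℓk : 2 * ℓ ≤ k) (hkc : k < 2 * c * ℓ) :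
    bSemiSq k φ ≤ 32 * ∑ i, ∑ j ∈ Icc 1 (ℓ - 1), (u i (j + 1) - u i j) ^ 2
      + 2 * c * ∑ i, ∑ j ∈ Icc 1 ℓ, (u (i + 1) j - u i j) ^ 2 := by
  have hℓ : 0 < ℓ := Nat.pos_of_ne_zero fun h => by simp [h] at hkc
  have hcoeff : 2 * ((k / 2 : ℕ) : ℝ) / ℓ ≤ 2 * c := by
    rw [div_le_iff₀ (by exact_mod_cast hℓ)]
    exact_mod_cast (Nat.mul_div_le k 2).trans hkc.le
  have hEH : 0 ≤ ∑ m ∈ Icc 1 ℓ, shiftEnergy (fun i => u i m) 1 :=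
    sum_nonneg fun m _ => shiftEnergy_nonneg _ _
  calc bSemiSq k φ ≤ ∑ d ∈ Icc 1 (k / 2), shiftEnergy φ (d • 1) / (d : ℝ) ^ 2 := by
        simpa using bSemiSq_le_sum_Icc_shiftEnergy_div φ
    _ ≤ 8 * ∑ d ∈ Icc 1 (k / 2), ∑ i, ((∑ j ∈ Icc 1 d, pathIncrement (u i) ℓ j) / d) ^ 2
          + 2 * ((k / 2 : ℕ) : ℝ) / ℓ * ∑ m ∈ Icc 1 ℓ, shiftEnergy (fun i => u i m) 1 :=
        sum_Icc_shiftEnergy_nsmul_div_sq_le hu 1 hℓ (by omega)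
    _ ≤ 32 * ∑ i, ∑ j ∈ Icc 1 (ℓ - 1), (u i (j + 1) - u i j) ^ 2
          + 2 * c * ∑ m ∈ Icc 1 ℓ, shiftEnergy (fun i => u i m) 1 := by
        refine add_le_add ?_ (mul_le_mul_of_nonneg_right hcoeff hEH)
        linarith [sum_Icc_sum_sq_pathIncrement_div_le u (ℓ := ℓ) (D := k / 2) (by omega)]
    _ = _ := by
        simp only [shiftEnergy]
        rw [sum_comm (s := Icc 1 ℓ)]

theorem discrete_trace_theorem_general (k ℓ c : ℕ) [NeZero k]
    (h1 : 4 * ℓ < k) (h2 : k < 2 * c * ℓ)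
    (φ : ZMod k → ℝ) :
    (∀ u : ZMod k → ℕ → ℝ, (∀ i : ZMod k, u i 1 = φ i) →
      bSemiSq k φ ≤ max (3 * (c : ℝ)) (4 * π ^ 2) * energySq k ℓ u) ∧
    (∃ u : ZMod k → ℕ → ℝ, (∀ i : ZMod k, u i 1 = φ i) ∧
      energySq k ℓ u ≤ (2 * (c : ℝ) + 233 / 9) * bSemiSq k φ) := by
  refine ⟨fun u hu => ?_, shiftAverage φ 1, shiftAverage_one φ 1, ?_⟩
  · have h32 : (32 : ℝ) ≤ max (3 * (c : ℝ)) (4 * π ^ 2) :=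
      le_max_of_le_right (by nlinarith [pi_gt_three])
    have h2c : 2 * (c : ℝ) ≤ max (3 * (c : ℝ)) (4 * π ^ 2) :=
      le_max_of_le_left (by linarith [(Nat.cast_nonneg c : (0 : ℝ) ≤ c)])
    have hV := sum_nonneg fun i (_ : i ∈ univ) =>
      sum_nonneg fun j (_ : j ∈ Icc 1 (ℓ - 1)) => sq_nonneg (u i (j + 1) - u i j)
    have hH := sum_nonneg fun i (_ : i ∈ univ) =>
      sum_nonneg fun j (_ : j ∈ Icc 1 ℓ) => sq_nonneg (u (i + 1) j - u i j)
    rw [energySq]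
    nlinarith [bSemiSq_le_of_extension hu (by omega : 2 * ℓ ≤ k) h2]
  · nlinarith [energySq_shiftAverage_le φ (by omega : 2 * ℓ < k), bSemiSq_nonneg φ,
      (Nat.cast_nonneg c : (0 : ℝ) ≤ c)]

/-- Discrete trace theorem for `C_k □ P_ℓ`: assuming `ℓ ≥ 2`, for every
`φ : ℤ/kℤ → ℝ`:
(i) every `u` with `u(i,1) = φ(i)` for all `i` satisfies `|φ|_Γ² ≤ max{3c, 4π²} · |u|_G²`;
(ii) there exists `u` with `u(i,1) = φ(i)` for all `i` and `|u|_G² ≤ (2c + 233/9) · |φ|_Γ²`. -/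
theorem discrete_trace_theorem (k ℓ c : ℕ) [NeZero k]
    (h1 : 4 * ℓ < k) (h2 : k < 2 * c * ℓ) (hℓ : 2 ≤ ℓ)
    (φ : ZMod k → ℝ) :
    (∀ u : ZMod k → ℕ → ℝ, (∀ i : ZMod k, u i 1 = φ i) →
      bSemiSq k φ ≤ max (3 * (c : ℝ)) (4 * π ^ 2) * energySq k ℓ u) ∧
    (∃ u : ZMod k → ℕ → ℝ, (∀ i : ZMod k, u i 1 = φ i) ∧
      energySq k ℓ u ≤ (2 * (c : ℝ) + 233 / 9) * bSemiSq k φ) :=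
  discrete_trace_theorem_general k ℓ c h1 h2 φ
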